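/- arXiv:2208.08385 — 3 statements merged into one kernel-verified Lean document; each statement's English description precedes it below -/
import Mathlib

section
/- If α is a ∥·∥₁-dominating normalized gauge norm on measurable functions on the unit circle, f ∈ L^α and h ∈ L^{α'} (where α' is the dual norm of α), then the product fh is integrable and ∥fh∥₁ ≤ α(f)·α'(h). -/
open MeasureTheory Complex Filter Finset
open scoped ENNReal NNReal Topology

noncomputable section

/-- `μ` is a rotation-invariant probability measure supported on the unit circle in `ℂ`
(the normalized Lebesgue measure on `𝕋`). -/
def OnCircle (μ : Measure ℂ) : Prop :=
  IsProbabilityMeasure μ ∧ μ ((Metric.sphere (0 : ℂ) 1)ᶜ) = 0 ∧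
    ∀ w : ℂ, ‖w‖ = 1 → Measure.map (fun z => w * z) μ = μ

/-- A `‖·‖₁`-dominating normalized gauge norm, extended to all measurable functions. -/
structure GaugeNorm (μ : Measure ℂ) where
  α : (ℂ → ℂ) → ℝ≥0∞
  norm_one : α (fun _ => 1) = 1
  abs_eq : ∀ f : ℂ → ℂ, α (fun z => ((‖f z‖ : ℝ) : ℂ)) = α f
  dominates : ∀ f : ℂ → ℂ, MemLp f ⊤ μ → ∫⁻ z, ‖f z‖₊ ∂μ ≤ α f
  finite_on_bdd : ∀ f : ℂ → ℂ, MemLp f ⊤ μ → α f < ⊤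
  add_le : ∀ f g : ℂ → ℂ, α (f + g) ≤ α f + α g
  smul_eq : ∀ (c : ℂ) (f : ℂ → ℂ), α (fun z => c * f z) = (‖c‖₊ : ℝ≥0∞) * α f
  ae_eq : ∀ f g : ℂ → ℂ, f =ᵐ[μ] g → α f = α g
  eq_sup_simple : ∀ f : ℂ → ℂ, AEMeasurable f μ →
    α f = ⨆ (s : SimpleFunc ℂ ℝ) (_ : ∀ z, 0 ≤ s z ∧ s z ≤ ‖f z‖),
      α (fun z => ((s z : ℝ) : ℂ))

/-- The gauge norm `α` is continuous: `α(χ_E) → 0` as `μ E → 0⁺`. -/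
def GaugeNorm.IsContinuous {μ : Measure ℂ} (N : GaugeNorm μ) : Prop :=
  ∀ ε : ℝ≥0∞, 0 < ε → ∃ δ : ℝ≥0∞, 0 < δ ∧
    ∀ E : Set ℂ, MeasurableSet E → μ E < δ →
      N.α (Set.indicator E fun _ => 1) < ε

/-- The gauge norm is rotationally symmetric. -/
def GaugeNorm.IsRotSym {μ : Measure ℂ} (N : GaugeNorm μ) : Prop :=
  ∀ (f : ℂ → ℂ) (w : ℂ), ‖w‖ = 1 →
    N.α (fun z => f ((starRingEnd ℂ) w * z)) = N.α f

/-- `α`-closure of a set of functions. -/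
def aClosure {μ : Measure ℂ} (N : GaugeNorm μ) (S : Set (ℂ → ℂ)) : Set (ℂ → ℂ) :=
  {f | ∀ ε : ℝ≥0∞, 0 < ε → ∃ g ∈ S, N.α (f - g) < ε}

/-- Membership in `H^∞`: essentially bounded with vanishing negative Fourier coefficients
(`z^{-n} = z̄^n = z^n` pairing on the circle: coefficient `⟨f, z^{-n}⟩ = ∫ f(z) zⁿ dμ` for `n > 0`). -/
def MemHinf (μ : Measure ℂ) (f : ℂ → ℂ) : Prop :=
  MemLp f ⊤ μ ∧ ∀ n : ℕ, 0 < n → ∫ z, f z * z ^ n ∂μ = 0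

/-- The Hardy space `H^α`: the `α`-closure of `H^∞`. -/
def Halpha {μ : Measure ℂ} (N : GaugeNorm μ) : Set (ℂ → ℂ) :=
  {f | AEMeasurable f μ ∧ f ∈ aClosure N {g | MemHinf μ g}}

/-- Finite Blaschke product with zeros `a 0, …, a (n-1)`. -/
def blaschke {n : ℕ} (a : Fin n → ℂ) : ℂ → ℂ :=
  fun z => ∏ i, (z - a i) / (1 - (starRingEnd ℂ) (a i) * z)

/-- `H^∞(B) = {f ∘ B : f ∈ H^∞}` (up to a.e. equality). -/
def HinfB (μ : Measure ℂ) (B : ℂ → ℂ) : Set (ℂ → ℂ) :=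
  {g | ∃ f : ℂ → ℂ, MemHinf μ f ∧ g =ᵐ[μ] f ∘ B}

/-- `M_α(B)`: the `α`-closure of `H^∞(B)`. -/
def Malpha {μ : Measure ℂ} (N : GaugeNorm μ) (B : ℂ → ℂ) : Set (ℂ → ℂ) :=
  {f | AEMeasurable f μ ∧ f ∈ aClosure N (HinfB μ B)}

/-- A linear subspace of functions. -/
def IsSubspace (M : Set (ℂ → ℂ)) : Prop :=
  (fun _ => 0) ∈ M ∧ (∀ f ∈ M, ∀ g ∈ M, f + g ∈ M) ∧
    ∀ (c : ℂ), ∀ f ∈ M, (fun z => c * f z) ∈ M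

/-- An `α`-closed linear subspace of `H^α`. -/
def IsClosedSubspace {μ : Measure ℂ} (N : GaugeNorm μ) (M : Set (ℂ → ℂ)) : Prop :=
  IsSubspace M ∧ M ⊆ Halpha N ∧ ∀ f ∈ Halpha N, f ∈ aClosure N M → f ∈ M

/-- `φ` is `B`-inner: `{Bᵐφ : m ≥ 0}` is orthonormal in `H²`. -/
def BInner (μ : Measure ℂ) (B φ : ℂ → ℂ) : Prop :=
  MemHinf μ φ ∧ ∀ m k : ℕ,
    ∫ z, (B z ^ m * φ z) * (starRingEnd ℂ) (B z ^ k * φ z) ∂μ =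
      if m = k then 1 else 0

/-- `J₁,…,J_r` form a `B`-inner family: `{Bᵐ J i}` is orthonormal in `H²`. -/
def BInnerFamily (μ : Measure ℂ) (B : ℂ → ℂ) {r : ℕ} (J : Fin r → ℂ → ℂ) : Prop :=
  (∀ i, MemHinf μ (J i)) ∧ ∀ (i j : Fin r) (m k : ℕ),
    ∫ z, (B z ^ m * J i z) * (starRingEnd ℂ) (B z ^ k * J j z) ∂μ =
      if i = j ∧ m = k then 1 else 0

/-- Weak*-closure with respect to the pairing with `L¹` functions. -/
def wstarClosure (μ : Measure ℂ) (S : Set (ℂ → ℂ)) : Set (ℂ → ℂ) :=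
  {f | ∀ ε : ℝ, 0 < ε → ∀ (k : ℕ) (h : Fin k → ℂ → ℂ),
      (∀ i, Integrable (h i) μ) →
      ∃ g ∈ S, ∀ i, ‖∫ z, (f z - g z) * h i z ∂μ‖ < ε}

/-- `M` is weak*-closed (as a subset of `L^∞`). -/
def WeakStarClosedIn (μ : Measure ℂ) (M : Set (ℂ → ℂ)) : Prop :=
  ∀ f : ℂ → ℂ, MemLp f ⊤ μ → f ∈ wstarClosure μ M → f ∈ M

/-- An inner function: `|J| = 1` a.e. -/
def IsInnerF (μ : Measure ℂ) (J : ℂ → ℂ) : Prop :=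
  MemHinf μ J ∧ ∀ᵐ z ∂μ, ‖J z‖ = 1

/-- The dual norm `α'(h) = sup{∫ |fh| dμ : f ∈ L^∞, α(f) ≤ 1}`. -/
def dualNorm {μ : Measure ℂ} (N : GaugeNorm μ) (h : ℂ → ℂ) : ℝ≥0∞ :=
  ⨆ (f : ℂ → ℂ) (_ : MemLp f ⊤ μ ∧ N.α f ≤ 1), ∫⁻ z, ‖f z * h z‖₊ ∂μ

/-!
For `g ∈ L^∞` with `α(g) > 0`, the definition of `α'` applied to `g / α(g)` gives
`‖gh‖₁ ≤ α(g) α'(h)`; if `α(g) = 0` then `g = 0` a.e., because `α` dominates `‖·‖₁`.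
A measurable `f` is reached by monotone convergence along the simple functions
`eapprox |f| ↑ |f|`, each of which is bounded with gauge norm at most `α(f)` since `α` is
the supremum over simple functions below `|f|`. Finally `α(f) < ∞` for `f` in the
`α`-closure of `L^∞`, so the bound makes `fh` integrable.
-/

namespace MeasureTheory

variable {α : Type*} [MeasurableSpace α] {μ : Measure α}

lemma SimpleFunc.eapprox_le {F : α → ℝ≥0∞} (hF : Measurable F) (n : ℕ) (a : α) :
    SimpleFunc.eapprox F n a ≤ F a :=
  (le_iSup (fun m => SimpleFunc.eapprox F m a) n).trans_eq (SimpleFunc.iSup_eapprox_apply hF a)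

lemma lintegral_mul_eq_iSup_eapprox {F H : α → ℝ≥0∞} (hF : Measurable F)
    (hH : AEMeasurable H μ) :
    ∫⁻ a, F a * H a ∂μ = ⨆ n, ∫⁻ a, SimpleFunc.eapprox F n a * H a ∂μ := by
  rw [← lintegral_iSup' (f := fun n a => SimpleFunc.eapprox F n a * H a)
    (fun n => (SimpleFunc.eapprox F n).measurable.aemeasurable.mul hH)
    (ae_of_all _ fun a m k hmk => mul_le_mul_left (SimpleFunc.monotone_eapprox F hmk a) _)]
  simp only [← ENNReal.iSup_mul, SimpleFunc.iSup_eapprox_apply hF]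

end MeasureTheory

namespace GaugeNorm

variable {μ : Measure ℂ} (N : GaugeNorm μ)

lemma α_lt_top_of_mem_aClosure {f : ℂ → ℂ} (hf : f ∈ aClosure N {g | MemLp g ⊤ μ}) :
    N.α f < ⊤ := by
  obtain ⟨g, hg, hfg⟩ := hf 1 zero_lt_one
  calc N.α f = N.α ((f - g) + g) := by rw [sub_add_cancel]
    _ ≤ N.α (f - g) + N.α g := N.add_le _ _
    _ < ⊤ := ENNReal.add_lt_top.mpr ⟨hfg.trans ENNReal.one_lt_top, N.finite_on_bdd g hg⟩

lemma ae_eq_zero_of_α_eq_zero {g : ℂ → ℂ} (hg : MemLp g ⊤ μ) (h0 : N.α g = 0) :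
    g =ᵐ[μ] 0 := by
  have hint : ∫⁻ z, ‖g z‖₊ ∂μ = 0 := le_antisymm (h0 ▸ N.dominates g hg) zero_le
  filter_upwards [(lintegral_eq_zero_iff' hg.aestronglyMeasurable.enorm).mp hint] with z hz
  simpa using hz

lemma α_simpleFunc_le {f : ℂ → ℂ} (hf : AEMeasurable f μ) (s : SimpleFunc ℂ ℝ)
    (hs : ∀ z, 0 ≤ s z ∧ s z ≤ ‖f z‖) : N.α (fun z => ((s z : ℝ) : ℂ)) ≤ N.α f := by
  rw [N.eq_sup_simple f hf]
  exact le_iSup₂_of_le s hs le_rfl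

lemma α_eapprox_le {f : ℂ → ℂ} (hf : Measurable f) (n : ℕ) :
    N.α (fun z => (((SimpleFunc.eapprox (‖f ·‖ₑ) n z).toReal : ℝ) : ℂ)) ≤ N.α f := by
  refine N.α_simpleFunc_le hf.aemeasurable ((SimpleFunc.eapprox _ n).map ENNReal.toReal)
    fun z => ⟨ENNReal.toReal_nonneg, ?_⟩
  simpa using ENNReal.toReal_mono ENNReal.coe_ne_top (SimpleFunc.eapprox_le hf.enorm n z)

lemma lintegral_nnnorm_mul_le_dualNorm {g : ℂ → ℂ} (hg : MemLp g ⊤ μ) (hα : N.α g ≤ 1)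
    (h : ℂ → ℂ) : ∫⁻ z, ‖g z * h z‖₊ ∂μ ≤ dualNorm N h :=
  le_iSup₂_of_le g ⟨hg, hα⟩ le_rfl

lemma lintegral_nnnorm_mul_le_of_memLp {g : ℂ → ℂ} (hg : MemLp g ⊤ μ) (h : ℂ → ℂ) :
    ∫⁻ z, ‖g z * h z‖₊ ∂μ ≤ N.α g * dualNorm N h := by
  by_cases h0 : N.α g = 0
  · have hgh : (fun z => (‖g z * h z‖₊ : ℝ≥0∞)) =ᵐ[μ] 0 := by
      filter_upwards [N.ae_eq_zero_of_α_eq_zero hg h0] with z hz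
      simp [hz]
    rw [lintegral_congr_ae hgh]
    simp
  have hfin : N.α g ≠ ⊤ := (N.finite_on_bdd g hg).ne
  set c : ℂ := (((N.α g)⁻¹.toNNReal : ℝ) : ℂ)
  have hc : (‖c‖₊ : ℝ≥0∞) = (N.α g)⁻¹ := by
    simp [c, - ENNReal.toNNReal_inv, ENNReal.coe_toNNReal, h0]
  have hcg : N.α (fun z => c * g z) ≤ 1 := by
    rw [N.smul_eq, hc, ENNReal.inv_mul_cancel h0 hfin]
  calc ∫⁻ z, ‖g z * h z‖₊ ∂μ
      = N.α g * ((N.α g)⁻¹ * ∫⁻ z, ‖g z * h z‖₊ ∂μ) := by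
        rw [← mul_assoc, ENNReal.mul_inv_cancel h0 hfin, one_mul]
    _ = N.α g * ∫⁻ z, ‖c * g z * h z‖₊ ∂μ := by
        rw [← hc, ← lintegral_const_mul' _ _ ENNReal.coe_ne_top]
        simp only [mul_assoc, nnnorm_mul, ENNReal.coe_mul]
    _ ≤ N.α g * dualNorm N h := by
        gcongr
        exact N.lintegral_nnnorm_mul_le_dualNorm (hg.const_mul c) hcg h

lemma lintegral_nnnorm_mul_le {f h : ℂ → ℂ} (hf : AEMeasurable f μ) (hh : AEMeasurable h μ) :
    ∫⁻ z, ‖f z * h z‖₊ ∂μ ≤ N.α f * dualNorm N h := by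
  set f₀ := hf.mk f
  have hf₀ : Measurable f₀ := hf.measurable_mk
  set e := SimpleFunc.eapprox (‖f₀ ·‖ₑ)
  have happrox : ∀ n, ∫⁻ z, e n z * ‖h z‖ₑ ∂μ ≤ N.α f * dualNorm N h := fun n => calc
    ∫⁻ z, e n z * ‖h z‖ₑ ∂μ = ∫⁻ z, ‖(((e n z).toReal : ℝ) : ℂ) * h z‖₊ ∂μ := by
        congr with z
        rw [nnnorm_mul, ENNReal.coe_mul, Complex.nnnorm_real, ← enorm_eq_nnnorm,
          Real.enorm_of_nonneg ENNReal.toReal_nonneg,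
          ENNReal.ofReal_toReal (SimpleFunc.eapprox_lt_top _ n z).ne]
        rfl
    _ ≤ N.α (fun z => (((e n z).toReal : ℝ) : ℂ)) * dualNorm N h :=
        N.lintegral_nnnorm_mul_le_of_memLp (SimpleFunc.memLp_top
          ((e n).map fun x : ℝ≥0∞ => ((x.toReal : ℝ) : ℂ)) μ) h
    _ ≤ N.α f₀ * dualNorm N h := by gcongr; exact N.α_eapprox_le hf₀ n
    _ = N.α f * dualNorm N h := by rw [N.ae_eq f f₀ hf.ae_eq_mk]
  calc ∫⁻ z, ‖f z * h z‖₊ ∂μ = ∫⁻ z, ‖f₀ z‖ₑ * ‖h z‖ₑ ∂μ := by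
        refine lintegral_congr_ae ?_
        filter_upwards [hf.ae_eq_mk] with z hz
        rw [nnnorm_mul, ENNReal.coe_mul, hz]
        rfl
    _ = ⨆ n, ∫⁻ z, e n z * ‖h z‖ₑ ∂μ := lintegral_mul_eq_iSup_eapprox hf₀.enorm hh.enorm
    _ ≤ N.α f * dualNorm N h := iSup_le happrox

end GaugeNorm

theorem holder_gauge_general (μ : Measure ℂ) (N : GaugeNorm μ)
    (f h : ℂ → ℂ)
    (hf_meas : AEMeasurable f μ) (hf : f ∈ aClosure N {g | MemLp g ⊤ μ})
    (hh_meas : AEMeasurable h μ) (hh : dualNorm N h < ⊤) :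
    Integrable (fun z => f z * h z) μ ∧
      ∫⁻ z, ‖f z * h z‖₊ ∂μ ≤ N.α f * dualNorm N h := by
  have hle := N.lintegral_nnnorm_mul_le hf_meas hh_meas
  refine ⟨⟨(hf_meas.mul hh_meas).aestronglyMeasurable, ?_⟩, hle⟩
  exact hle.trans_lt (ENNReal.mul_lt_top (N.α_lt_top_of_mem_aClosure hf) hh)

/-- Lemma 2.4, generalized Hölder inequality: if `f ∈ L^α` and
`h ∈ 𝓛^{α'}` then `fh ∈ L¹` and `‖fh‖₁ ≤ α(f)·α'(h)`. -/
theorem holder_gauge (μ : Measure ℂ) (hμ : OnCircle μ) (N : GaugeNorm μ)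
    (f h : ℂ → ℂ)
    (hf_meas : AEMeasurable f μ) (hf : f ∈ aClosure N {g | MemLp g ⊤ μ})
    (hh_meas : AEMeasurable h μ) (hh : dualNorm N h < ⊤) :
    Integrable (fun z => f z * h z) μ ∧
      ∫⁻ z, ‖f z * h z‖₊ ∂μ ≤ N.α f * dualNorm N h :=
  holder_gauge_general μ N f h hf_meas hf hh_meas hh
end
end

section
/- Let α be a continuous ∥·∥₁-dominating normalized gauge norm. If 0 ≤ f₁ ≤ f₂ ≤ … is an increasing sequence of measurable functions on the unit circle converging almost everywhere to f, then α(fₙ) → α(f). -/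
open MeasureTheory Complex Filter Finset
open scoped ENNReal NNReal Topology

noncomputable section

/-! Since `α` only sees `|f|` and is approximated from below by simple functions, it suffices
to bound `α(s) ≤ supₙ α(fₙ) + ε` for a simple `0 ≤ s ≤ |f|`. On `Aₙ = {s ≤ |fₙ| + ε}` the function
`s` is dominated by `|fₙ| + ε`; the sets `Aₙ` increase to almost everything, so `μ(Aₙᶜ) → 0`, and by
continuity of `α` the remainder `s · χ_{Aₙᶜ} ≤ ‖s‖_∞ χ_{Aₙᶜ}` has vanishing gauge norm. -/

namespace GaugeNorm

variable {μ : Measure ℂ}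

theorem measure_univ_le_one (N : GaugeNorm μ) : μ Set.univ ≤ 1 := by
  simpa [N.norm_one] using N.dominates (fun _ => 1) (memLp_top_const 1)

theorem isFiniteMeasure (N : GaugeNorm μ) : IsFiniteMeasure μ :=
  ⟨N.measure_univ_le_one.trans_lt ENNReal.one_lt_top⟩

variable (N : GaugeNorm μ)

theorem alpha_const (c : ℂ) : N.α (fun _ => c) = ‖c‖₊ := by
  simpa [N.norm_one] using N.smul_eq c fun _ => 1

theorem alpha_mono {u v : ℂ → ℂ} (hu : AEMeasurable u μ) (hv : AEMeasurable v μ)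
    (huv : ∀ z, ‖u z‖ ≤ ‖v z‖) : N.α u ≤ N.α v := by
  rw [N.eq_sup_simple u hu, N.eq_sup_simple v hv]
  exact iSup₂_mono' fun s hs => ⟨s, fun z => ⟨(hs z).1, (hs z).2.trans (huv z)⟩, le_rfl⟩

theorem alpha_mono_ae {u v : ℂ → ℂ} (hu : AEMeasurable u μ) (hv : AEMeasurable v μ)
    (huv : ∀ᵐ z ∂μ, ‖u z‖ ≤ ‖v z‖) : N.α u ≤ N.α v := by
  set S := toMeasurable μ {z | ¬ ‖u z‖ ≤ ‖v z‖}
  have hS : ∀ᵐ z ∂μ, z ∉ S :=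
    measure_eq_zero_iff_ae_notMem.1 ((measure_toMeasurable _).trans huv)
  calc N.α u = N.α (Sᶜ.indicator u) :=
        N.ae_eq _ _ (by filter_upwards [hS] with z hz; simp [hz])
    _ ≤ N.α v := by
        refine N.alpha_mono (hu.indicator (measurableSet_toMeasurable _ _).compl) hv fun z => ?_
        by_cases hz : z ∈ S
        · simp [hz]
        · simpa [hz] using not_not.1 fun h => hz (subset_toMeasurable _ _ h)

theorem alpha_norm_add_const_le (u : ℂ → ℂ) (c : ℝ≥0) :
    N.α (fun z => ((‖u z‖ + c : ℝ) : ℂ)) ≤ N.α u + c := by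
  calc N.α (fun z => ((‖u z‖ + c : ℝ) : ℂ))
      = N.α ((fun z => ((‖u z‖ : ℝ) : ℂ)) + fun _ => ((c : ℝ) : ℂ)) := by
        congr 1; ext z; simp
    _ ≤ N.α u + c := by
        refine (N.add_le _ _).trans ?_
        rw [N.abs_eq, N.alpha_const]
        simp

theorem alpha_le_indicator_add_mul_indicator_compl {u : ℂ → ℂ} (hu : AEMeasurable u μ)
    {A : Set ℂ} (hA : MeasurableSet A) {c : ℂ} (hc : ∀ z, ‖u z‖ ≤ ‖c‖) :
    N.α u ≤ N.α (A.indicator u) + ‖c‖₊ * N.α (Aᶜ.indicator fun _ => 1) := by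
  calc N.α u = N.α (A.indicator u + Aᶜ.indicator u) := by rw [Set.indicator_self_add_compl]
    _ ≤ N.α (A.indicator u) + N.α (Aᶜ.indicator u) := N.add_le _ _
    _ ≤ N.α (A.indicator u) + N.α (fun z => c * Aᶜ.indicator (fun _ => 1) z) := by
        gcongr
        refine N.alpha_mono (hu.indicator hA.compl)
          (aemeasurable_const.mul (aemeasurable_const.indicator hA.compl)) fun z => ?_
        by_cases hz : z ∈ A <;> simp [hz, hc z]
    _ = N.α (A.indicator u) + ‖c‖₊ * N.α (Aᶜ.indicator fun _ => 1) := by rw [N.smul_eq]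

variable {N}

theorem IsContinuous.tendsto_alpha_indicator_compl (hN : N.IsContinuous) {A : ℕ → Set ℂ}
    (hA : ∀ n, MeasurableSet (A n)) (hmono : Monotone A) (hcover : ∀ᵐ z ∂μ, ∃ n, z ∈ A n) :
    Tendsto (fun n => N.α ((A n)ᶜ.indicator fun _ => 1)) atTop (𝓝 0) := by
  have := N.isFiniteMeasure
  have hμ : Tendsto (fun n => μ (A n)ᶜ) atTop (𝓝 0) := by
    have hnull : μ (⋂ n, (A n)ᶜ) = 0 := by
      rw [← Set.compl_iUnion]
      exact measure_eq_zero_iff_ae_notMem.2 (by simpa using hcover)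
    rw [← hnull]
    exact tendsto_measure_iInter_atTop (fun n => (hA n).compl.nullMeasurableSet)
      (fun _ _ hnm => Set.compl_subset_compl.2 (hmono hnm)) ⟨0, measure_ne_top μ _⟩
  refine ENNReal.tendsto_nhds_zero.2 fun ε hε => ?_
  obtain ⟨δ, hδ, hsmall⟩ := hN ε hε
  filter_upwards [hμ.eventually_lt_const hδ] with n hn
  exact (hsmall _ (hA n).compl hn).le

theorem IsContinuous.alpha_simpleFunc_le_iSup (hN : N.IsContinuous) {F : ℕ → ℂ → ℂ}
    {G : ℂ → ℂ} (hF : ∀ n, Measurable (F n)) (hmono : ∀ z, Monotone fun n => ‖F n z‖)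
    (hlim : ∀ᵐ z ∂μ, Tendsto (fun n => ‖F n z‖) atTop (𝓝 ‖G z‖))
    (s : SimpleFunc ℂ ℝ) (hs : ∀ z, 0 ≤ s z ∧ s z ≤ ‖G z‖) :
    N.α (fun z => ((s z : ℝ) : ℂ)) ≤ ⨆ n, N.α (F n) := by
  refine ENNReal.le_of_forall_pos_le_add fun ε hε _ => ?_
  set A : ℕ → Set ℂ := fun n => {z | s z ≤ ‖F n z‖ + ε}
  have hA : ∀ n, MeasurableSet (A n) := fun n =>
    measurableSet_le s.measurable ((hF n).norm.add_const _)
  have hAmono : Monotone A := fun n m hnm z (hz : _ ≤ _) =>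
    hz.trans (add_le_add_left (hmono z hnm) _)
  have hcover : ∀ᵐ z ∂μ, ∃ n, z ∈ A n := by
    filter_upwards [hlim] with z hz
    have hlt : s z < ‖G z‖ + ε := (hs z).2.trans_lt (lt_add_of_pos_right _ hε)
    obtain ⟨n, hn⟩ := ((hz.add_const (ε : ℝ)).eventually (eventually_gt_nhds hlt)).exists
    exact ⟨n, hn.le⟩
  obtain ⟨M, hM⟩ := s.exists_forall_le
  have hsM : ∀ z, ‖((s z : ℝ) : ℂ)‖ ≤ ‖((max M 0 : ℝ) : ℂ)‖ := fun z => by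
    simpa [abs_of_nonneg (hs z).1, abs_of_nonneg (le_max_right M 0)] using
      (hM z).trans (le_max_left M 0)
  have hsA : ∀ n, N.α ((A n).indicator fun z => ((s z : ℝ) : ℂ)) ≤ N.α (F n) + ε := fun n => by
    refine le_trans (N.alpha_mono (s.measurable.complex_ofReal.aemeasurable.indicator (hA n))
      ((hF n).norm.add_const _).complex_ofReal.aemeasurable fun z => ?_)
      (N.alpha_norm_add_const_le (F n) ε)
    by_cases hz : z ∈ A n
    · rw [Set.indicator_of_mem hz, Complex.norm_real, Complex.norm_real,
        Real.norm_of_nonneg (hs z).1, Real.norm_of_nonneg (by positivity)]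
      exact hz
    · simp [hz]
  have hbound : ∀ n, N.α (fun z => ((s z : ℝ) : ℂ)) ≤ (⨆ n, N.α (F n)) + ε +
      ‖((max M 0 : ℝ) : ℂ)‖₊ * N.α ((A n)ᶜ.indicator fun _ => 1) := fun n => by
    refine (N.alpha_le_indicator_add_mul_indicator_compl
      s.measurable.complex_ofReal.aemeasurable (hA n) hsM).trans ?_
    gcongr
    refine (hsA n).trans ?_
    gcongr
    exact le_iSup (fun n => N.α (F n)) n
  have hrem := ENNReal.Tendsto.const_mul (hN.tendsto_alpha_indicator_compl hA hAmono hcover)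
    (Or.inr (ENNReal.coe_ne_top (r := ‖((max M 0 : ℝ) : ℂ)‖₊)))
  simpa using ge_of_tendsto' (hrem.const_add _) hbound

theorem IsContinuous.tendsto_alpha_of_monotone_norm (hN : N.IsContinuous) {F : ℕ → ℂ → ℂ}
    {G : ℂ → ℂ} (hF : ∀ n, Measurable (F n)) (hG : AEMeasurable G μ)
    (hmono : ∀ z, Monotone fun n => ‖F n z‖)
    (hlim : ∀ᵐ z ∂μ, Tendsto (fun n => ‖F n z‖) atTop (𝓝 ‖G z‖)) :
    Tendsto (fun n => N.α (F n)) atTop (𝓝 (N.α G)) := by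
  have hαmono : Monotone fun n => N.α (F n) := fun n m hnm =>
    N.alpha_mono (hF n).aemeasurable (hF m).aemeasurable fun z => hmono z hnm
  suffices h : ⨆ n, N.α (F n) = N.α G from h ▸ tendsto_atTop_iSup hαmono
  refine le_antisymm (iSup_le fun n => N.alpha_mono_ae (hF n).aemeasurable hG ?_) ?_
  · filter_upwards [hlim] with z hz
    exact (hmono z).ge_of_tendsto hz n
  · rw [N.eq_sup_simple G hG]
    exact iSup₂_le (hN.alpha_simpleFunc_le_iSup hF hmono hlim)

end GaugeNorm

theorem gauge_monotone_convergence_general (μ : Measure ℂ)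
    (N : GaugeNorm μ) (hN : N.IsContinuous)
    (f : ℕ → ℂ → ℝ) (g : ℂ → ℝ)
    (hmeas : ∀ n, Measurable (f n))
    (hnonneg : ∀ z, 0 ≤ f 0 z)
    (hmono : ∀ n z, f n z ≤ f (n + 1) z)
    (hae : ∀ᵐ z ∂μ, Tendsto (fun n => f n z) atTop (nhds (g z))) :
    Tendsto (fun n => N.α (fun z => ((f n z : ℝ) : ℂ))) atTop
      (nhds (N.α (fun z => ((g z : ℝ) : ℂ)))) := by
  have hmono' : ∀ z, Monotone fun n => f n z := fun z => monotone_nat_of_le_succ (hmono · z)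
  have hnorm : ∀ n z, ‖((f n z : ℝ) : ℂ)‖ = f n z := fun n z => by
    simp [abs_of_nonneg ((hnonneg z).trans (hmono' z n.zero_le))]
  have hg : AEMeasurable g μ :=
    aemeasurable_of_tendsto_metrizable_ae' (fun n => (hmeas n).aemeasurable) hae
  refine hN.tendsto_alpha_of_monotone_norm (fun n => (hmeas n).complex_ofReal)
    hg.complex_ofReal (by simpa only [hnorm] using hmono') ?_
  filter_upwards [hae] with z hz
  exact hz.ofReal.norm

/-- Proposition 2.2, generalized monotone convergence theorem:
for a continuous `‖·‖₁`-dominating normalized gauge norm `α`, if `0 ≤ f₁ ≤ f₂ ≤ …`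
are measurable and `fₙ → f` a.e., then `α(fₙ) → α(f)`. -/
theorem gauge_monotone_convergence (μ : Measure ℂ) (hμ : OnCircle μ)
    (N : GaugeNorm μ) (hN : N.IsContinuous)
    (f : ℕ → ℂ → ℝ) (g : ℂ → ℝ)
    (hmeas : ∀ n, Measurable (f n)) (hgmeas : Measurable g)
    (hnonneg : ∀ z, 0 ≤ f 0 z)
    (hmono : ∀ n z, f n z ≤ f (n + 1) z)
    (hae : ∀ᵐ z ∂μ, Tendsto (fun n => f n z) atTop (nhds (g z))) :
    Tendsto (fun n => N.α (fun z => ((f n z : ℝ) : ℂ))) atTop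
      (nhds (N.α (fun z => ((g z : ℝ) : ℂ)))) :=
  gauge_monotone_convergence_general μ N hN f g hmeas hnonneg hmono hae
end
end

section
/- Let α be a continuous ∥·∥₁-dominating normalized gauge norm and M a closed subspace of H^α. Then M ∩ H^∞ is weak*-closed in H^∞. -/
/-!
Let `f ∈ L^∞` lie in the weak* closure of `C = M ∩ H^∞`. Pairing with `zⁿ` shows `f ∈ H^∞ ⊆ H^α`.
If `f ∉ M`, then, `M` being `α`-closed, `α(f - g) ≥ e > 0` for all `g ∈ M`, and the Hahn–Banach
theorem for the seminorm `α` on `L^∞` gives a functional `Φ` vanishing on `C` with `Φ f = e` and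
`‖Φ‖ ≤ α`. Continuity of `α` makes `S ↦ Φ(χ_S)` a complex measure absolutely continuous with
respect to `μ`, so `Φ x = ∫ x h` for some `h ∈ L¹`: first for simple `x`, then for all `x ∈ L^∞`,
because simple functions are uniformly dense and `α ≤ ‖·‖_∞`. The weak* approximation tested
against `h` yields `g ∈ C` with `e = |Φ (f - g)| = |∫ (f - g) h| < e`.
-/

open MeasureTheory Complex Filter Finset
open scoped ENNReal NNReal Topology

noncomputable section

namespace MeasureTheory

variable {β : Type*} [MeasurableSpace β]

section SimpleApprox

variable {E : Type*}

theorem SimpleFunc.exists_forall_dist_lt [PseudoMetricSpace E]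
    [TopologicalSpace.SeparableSpace E] [Nonempty E] [MeasurableSpace E] [OpensMeasurableSpace E]
    {f : β → E} (hf : Measurable f) {K : Set E} (hK : IsCompact K) (hfK : ∀ z, f z ∈ K)
    {ε : ℝ} (hε : 0 < ε) : ∃ s : SimpleFunc β E, ∀ z, dist (s z) (f z) < ε := by
  set e := TopologicalSpace.denseSeq E
  obtain ⟨I, hI⟩ := hK.elim_finite_subcover (fun k => Metric.ball (e k) ε)
    (fun _ => Metric.isOpen_ball) fun y _ => by
      obtain ⟨k, hk⟩ := (TopologicalSpace.denseRange_denseSeq E).exists_dist_lt y hε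
      exact Set.mem_iUnion.2 ⟨k, Metric.mem_ball.2 hk⟩
  refine ⟨(SimpleFunc.nearestPt e (I.sup id)).comp f hf, fun z => ?_⟩
  obtain ⟨k, hkI, hk⟩ := Set.mem_iUnion₂.1 (hI (hfK z))
  have hle := SimpleFunc.edist_nearestPt_le e (f z) (Finset.le_sup (f := id) hkI)
  rw [edist_dist, edist_dist, ENNReal.ofReal_le_ofReal_iff dist_nonneg] at hle
  exact hle.trans_lt (Metric.mem_ball'.1 hk)

variable [NormedAddCommGroup E] [MeasurableSpace E] [BorelSpace E] {μ : Measure β}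

theorem AEStronglyMeasurable.exists_measurable_norm_le_ae_eq {u : β → E}
    (hu : AEStronglyMeasurable u μ) {C : ℝ} (hC : 0 ≤ C) (h : ∀ᵐ z ∂μ, ‖u z‖ ≤ C) :
    ∃ u' : β → E, Measurable u' ∧ (∀ z, ‖u' z‖ ≤ C) ∧ u =ᵐ[μ] u' := by
  have hmk : Measurable (hu.mk u) := hu.stronglyMeasurable_mk.measurable
  refine ⟨fun z => if ‖hu.mk u z‖ ≤ C then hu.mk u z else 0,
    Measurable.ite (measurableSet_le hmk.norm measurable_const) hmk measurable_const,
    fun z => ?_, ?_⟩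
  · dsimp only
    split_ifs with hz
    · exact hz
    · simpa using hC
  · filter_upwards [h, hu.ae_eq_mk] with z hz hz'
    rw [← hz', if_pos (hz' ▸ hz)]

theorem MemLp.exists_simpleFunc_ae_norm_sub_lt [ProperSpace E] {x : β → E} (hx : MemLp x ⊤ μ)
    {ε : ℝ} (hε : 0 < ε) : ∃ s : SimpleFunc β E, ∀ᵐ z ∂μ, ‖x z - s z‖ < ε := by
  have hxC : ∀ᵐ z ∂μ, ‖x z‖ ≤ (eLpNormEssSup x μ).toReal := by
    have hfin : eLpNormEssSup x μ ≠ ⊤ := by simpa using hx.2.ne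
    filter_upwards [ae_le_eLpNormEssSup (f := x) (μ := μ)] with z hz
    simpa using ENNReal.toReal_mono hfin hz
  obtain ⟨x', hx'm, hx'C, hxx'⟩ :=
    hx.1.exists_measurable_norm_le_ae_eq ENNReal.toReal_nonneg hxC
  obtain ⟨s, hs⟩ := SimpleFunc.exists_forall_dist_lt hx'm (isCompact_closedBall 0 _)
    (fun z => mem_closedBall_zero_iff.2 (hx'C z)) hε
  refine ⟨s, hxx'.mono fun z hz => ?_⟩
  rw [hz, ← dist_eq_norm, dist_comm]
  exact hs z

end SimpleApprox

section Density

theorem ComplexMeasure.withDensityᵥ_rnDeriv_eq (c : ComplexMeasure β) (μ : Measure β)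
    [SigmaFinite μ] (h : c ≪ᵥ μ.toENNRealVectorMeasure) : μ.withDensityᵥ (c.rnDeriv μ) = c := by
  rw [ComplexMeasure.absolutelyContinuous_ennreal_iff] at h
  ext1 S hS
  rw [withDensityᵥ_apply (c.integrable_rnDeriv μ) hS]
  apply Complex.ext
  · rw [← RCLike.re_eq_complex_re, ← integral_re (c.integrable_rnDeriv μ).integrableOn]
    change ∫ x in S, c.re.rnDeriv μ x ∂μ = (c S).re
    rw [← withDensityᵥ_apply (SignedMeasure.integrable_rnDeriv _ _) hS,
      SignedMeasure.withDensityᵥ_rnDeriv_eq _ _ h.1]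
    rfl
  · rw [← RCLike.im_eq_complex_im, ← integral_im (c.integrable_rnDeriv μ).integrableOn]
    change ∫ x in S, c.im.rnDeriv μ x ∂μ = (c S).im
    rw [← withDensityᵥ_apply (SignedMeasure.integrable_rnDeriv _ _) hS,
      SignedMeasure.withDensityᵥ_rnDeriv_eq _ _ h.2]
    rfl

variable {E : Type*} [NormedAddCommGroup E] {μ : Measure β} [IsFiniteMeasure μ]

theorem hasSum_iUnion_of_additive_of_absCont {v : Set β → E}
    (hadd : ∀ s t, MeasurableSet s → MeasurableSet t → Disjoint s t → v (s ∪ t) = v s + v t)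
    (hsmall : ∀ ε > 0, ∃ δ > 0, ∀ s, MeasurableSet s → μ s < δ → ‖v s‖ < ε)
    {f : ℕ → Set β} (hf : ∀ i, MeasurableSet (f i)) (hd : Pairwise (Function.onFun Disjoint f)) :
    HasSum (fun i => v (f i)) (v (⋃ i, f i)) := by
  have hfin : ∀ I : Finset ℕ, v (⋃ i ∈ I, f i) = ∑ i ∈ I, v (f i) := by
    intro I
    induction I using Finset.induction_on with
    | empty => simpa using hadd ∅ ∅ .empty .empty (Set.disjoint_empty _)
    | insert a I ha ih =>
      rw [Finset.set_biUnion_insert, hadd _ _ (hf a) (I.measurableSet_biUnion fun i _ => hf i)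
        (Set.disjoint_iUnion₂_right.2 fun i hi => hd (ne_of_mem_of_not_mem hi ha).symm),
        ih, Finset.sum_insert ha]
  have htail : Tendsto (fun I : Finset ℕ => μ ((⋃ i, f i) \ ⋃ i ∈ I, f i)) atTop (𝓝 0) := by
    have hsum : ∑' i, μ (f i) ≠ ⊤ := by
      rw [← measure_iUnion hd hf]; exact measure_ne_top μ _
    refine tendsto_of_tendsto_of_tendsto_of_le_of_le tendsto_const_nhds
      (ENNReal.tendsto_tsum_compl_atTop_zero hsum) (fun _ => zero_le) fun I => ?_
    refine (measure_mono fun z hz => ?_).trans (measure_iUnion_le _)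
    obtain ⟨i, hi⟩ := Set.mem_iUnion.1 hz.1
    exact Set.mem_iUnion.2 ⟨⟨i, fun hiI => hz.2 (Set.mem_biUnion hiI hi)⟩, hi⟩
  have hvtail : Tendsto (fun I : Finset ℕ => v ((⋃ i, f i) \ ⋃ i ∈ I, f i)) atTop (𝓝 0) := by
    refine tendsto_zero_iff_norm_tendsto_zero.2 (Metric.tendsto_nhds.2 fun ε hε => ?_)
    obtain ⟨δ, hδ, hvδ⟩ := hsmall ε hε
    filter_upwards [htail.eventually (gt_mem_nhds hδ)] with I hI
    simpa using hvδ _ ((MeasurableSet.iUnion hf).diff (I.measurableSet_biUnion fun i _ => hf i)) hI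
  have hsplit : ∀ I : Finset ℕ,
      ∑ i ∈ I, v (f i) = v (⋃ i, f i) - v ((⋃ i, f i) \ ⋃ i ∈ I, f i) := by
    intro I
    rw [← hfin, eq_sub_iff_add_eq, ← hadd _ _ (I.measurableSet_biUnion fun i _ => hf i)
      ((MeasurableSet.iUnion hf).diff (I.measurableSet_biUnion fun i _ => hf i))
      Set.disjoint_sdiff_right,
      Set.union_sdiff_cancel (Set.iUnion₂_subset fun i _ => Set.subset_iUnion f i)]
  simpa [HasSum, hsplit] using tendsto_const_nhds.sub hvtail

theorem exists_integrable_setIntegral_eq_of_additive_of_absCont {v : Set β → ℂ}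
    (hadd : ∀ s t, MeasurableSet s → MeasurableSet t → Disjoint s t → v (s ∪ t) = v s + v t)
    (hsmall : ∀ ε > 0, ∃ δ > 0, ∀ s, MeasurableSet s → μ s < δ → ‖v s‖ < ε) :
    ∃ h : β → ℂ, Integrable h μ ∧ ∀ s, MeasurableSet s → ∫ x in s, h x ∂μ = v s := by
  classical
  let c : ComplexMeasure β :=
    { measureOf' := fun s => if MeasurableSet s then v s else 0
      empty' := by simpa using hadd ∅ ∅ .empty .empty (Set.disjoint_empty _)
      not_measurable' := fun s hs => if_neg hs
      m_iUnion' := fun f hf hd => by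
        simpa only [if_pos (hf _), if_pos (MeasurableSet.iUnion hf)] using
          hasSum_iUnion_of_additive_of_absCont hadd hsmall hf hd }
  have hc : ∀ s, MeasurableSet s → c s = v s := fun s hs => if_pos hs
  have hac : c ≪ᵥ μ.toENNRealVectorMeasure := by
    intro s hs0
    by_cases hs : MeasurableSet s
    · rw [Measure.toENNRealVectorMeasure_apply_measurable hs] at hs0
      rw [hc s hs, ← norm_eq_zero]
      refine le_antisymm (le_of_forall_pos_lt_add fun ε hε => ?_) (norm_nonneg _)
      obtain ⟨δ, hδ, hvδ⟩ := hsmall ε hε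
      simpa using hvδ s hs (hs0 ▸ hδ)
    · exact c.not_measurable hs
  refine ⟨c.rnDeriv μ, c.integrable_rnDeriv μ, fun s hs => ?_⟩
  rw [← withDensityᵥ_apply (c.integrable_rnDeriv μ) hs, c.withDensityᵥ_rnDeriv_eq μ hac, hc s hs]

end Density

def memLpTopSubmodule (μ : Measure β) : Submodule ℂ (β → ℂ) where
  carrier := {x | MemLp x ⊤ μ}
  add_mem' := MemLp.add
  zero_mem' := MemLp.zero'
  smul_mem' c _ hx := hx.const_smul c

namespace memLpTopSubmodule

variable {μ : Measure β}

instance : CoeFun (memLpTopSubmodule μ) fun _ => β → ℂ := ⟨Subtype.val⟩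

variable (μ) in
def ofSimpleFunc (s : SimpleFunc β ℂ) : memLpTopSubmodule μ := ⟨s, s.memLp_top μ⟩

variable (μ) in
def indicator {S : Set β} (hS : MeasurableSet S) : memLpTopSubmodule μ :=
  ⟨S.indicator fun _ => 1, (memLp_top_const 1).indicator hS⟩

theorem indicator_union {S T : Set β} (hS : MeasurableSet S) (hT : MeasurableSet T)
    (hST : Disjoint S T) : indicator μ (hS.union hT) = indicator μ hS + indicator μ hT :=
  Subtype.ext (Set.indicator_union_of_disjoint hST _)

theorem integrable_mul (x : memLpTopSubmodule μ) {h : β → ℂ} (hh : Integrable h μ) :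
    Integrable (fun z => x z * h z) μ :=
  hh.mul_of_top_right x.2

theorem apply_ofSimpleFunc_eq_integral (Φ : Module.Dual ℂ (memLpTopSubmodule μ)) {h : β → ℂ}
    (hh : Integrable h μ)
    (hΦ : ∀ S (hS : MeasurableSet S), Φ (indicator μ hS) = ∫ z in S, h z ∂μ)
    (s : SimpleFunc β ℂ) : Φ (ofSimpleFunc μ s) = ∫ z, s z * h z ∂μ := by
  induction s using SimpleFunc.induction with
  | @const c S hS =>
    have hs : ofSimpleFunc μ (.piecewise S hS (.const β c) (.const β 0)) = c • indicator μ hS :=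
      Subtype.ext <| funext fun z => by
        by_cases hz : z ∈ S <;> simp [ofSimpleFunc, indicator, hz]
    rw [hs, map_smul, hΦ, smul_eq_mul, ← integral_const_mul, ← integral_indicator hS]
    congr 1 with z
    by_cases hz : z ∈ S <;> simp [hz]
  | @add f g _ hf hg =>
    change Φ (ofSimpleFunc μ f + ofSimpleFunc μ g) = _
    rw [map_add, hf, hg]
    refine (integral_add (integrable_mul (ofSimpleFunc μ f) hh)
      (integrable_mul (ofSimpleFunc μ g) hh)).symm.trans ?_
    simp [ofSimpleFunc, add_mul]

end memLpTopSubmodule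

end MeasureTheory

theorem Module.Dual.exists_eq_zero_of_le_seminorm_sub {𝕜 E : Type*} [RCLike 𝕜] [AddCommGroup E]
    [Module 𝕜 E] {p : Seminorm 𝕜 E} {C : Submodule 𝕜 E} {f : E} {e : ℝ} (he : 0 < e)
    (hf : ∀ g ∈ C, e ≤ p (f - g)) :
    ∃ Φ : Module.Dual 𝕜 E, (∀ g ∈ C, Φ g = 0) ∧ Φ f = e ∧ ∀ x, ‖Φ x‖ ≤ p x := by
  have hfC : f ∉ (⟨C, 0⟩ : E →ₗ.[𝕜] 𝕜).domain := fun hfC => by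
    simpa using (hf f hfC).trans_lt' he
  set Φ₀ := LinearPMap.supSpanSingleton ⟨C, 0⟩ f (e : 𝕜) hfC
  have hΦ₀ : ∀ x : Φ₀.domain, ‖Φ₀ x‖ ≤ p x := by
    rintro ⟨_, hx⟩
    obtain ⟨g, hg, _, hc, rfl⟩ := Submodule.mem_sup.1 hx
    obtain ⟨c, rfl⟩ := Submodule.mem_span_singleton.1 hc
    rw [LinearPMap.supSpanSingleton_apply_mk _ _ _ hfC g hg c]
    rcases eq_or_ne c 0 with rfl | hc
    · simp
    have hfg : g + c • f = c • (f - (-c⁻¹) • g) := by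
      rw [smul_sub, smul_smul, mul_neg, mul_inv_cancel₀ hc]; module
    calc ‖(0 : C →ₗ[𝕜] 𝕜) ⟨g, hg⟩ + c • (e : 𝕜)‖ = ‖c‖ * e := by
          simp [abs_of_pos he]
      _ ≤ ‖c‖ * p (f - (-c⁻¹) • g) := by gcongr; exact hf _ (C.smul_mem _ hg)
      _ = p (g + c • f) := by rw [hfg, map_smul_eq_mul]
  obtain ⟨Φ, hΦΦ₀, hΦ⟩ := Module.Dual.exists_extension_of_le_seminorm Φ₀.domain Φ₀.toFun hΦ₀
  refine ⟨Φ, fun g hg => ?_, ?_, hΦ⟩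
  · exact (hΦΦ₀ ⟨g, _⟩).trans (LinearPMap.supSpanSingleton_apply_mk_of_mem _ _ hfC hg)
  · exact (hΦΦ₀ ⟨f, _⟩).trans (LinearPMap.supSpanSingleton_apply_self _ _ hfC)

namespace GaugeNorm

open memLpTopSubmodule

variable {μ : Measure ℂ} (N : GaugeNorm μ)

theorem α_zero : N.α 0 = 0 := by
  have h := N.smul_eq 0 fun _ => 1
  simp only [zero_mul, nnnorm_zero, ENNReal.coe_zero] at h
  exact h

theorem α_le_ofReal_of_ae_norm_le {u : ℂ → ℂ} (hu : AEStronglyMeasurable u μ) {C : ℝ}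
    (hC : 0 ≤ C) (h : ∀ᵐ z ∂μ, ‖u z‖ ≤ C) : N.α u ≤ ENNReal.ofReal C := by
  obtain ⟨u', hu'm, hu'C, huu'⟩ := hu.exists_measurable_norm_le_ae_eq hC h
  have hconst : N.α (fun _ => (C : ℂ)) = ENNReal.ofReal C := by
    rw [← Real.enorm_eq_ofReal hC]
    simpa [N.norm_one, enorm_eq_nnnorm] using N.smul_eq C fun _ => 1
  rw [N.ae_eq _ _ huu', N.eq_sup_simple _ hu'm.aemeasurable, ← hconst,
    N.eq_sup_simple _ aemeasurable_const]
  exact iSup₂_mono' fun s hs => ⟨s, fun z => ⟨(hs z).1, (hs z).2.trans <| by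
    simpa [abs_of_nonneg hC] using hu'C z⟩, le_rfl⟩

theorem exists_pos_forall_ofReal_le_α_sub {S : Set (ℂ → ℂ)} {f : ℂ → ℂ} (hf : f ∉ aClosure N S) :
    ∃ e : ℝ, 0 < e ∧ ∀ g ∈ S, ENNReal.ofReal e ≤ N.α (f - g) := by
  have hf' : ¬∀ ε : ℝ≥0∞, 0 < ε → ∃ g ∈ S, N.α (f - g) < ε := hf
  push Not at hf'
  obtain ⟨ε, hε, hεS⟩ := hf'
  obtain ⟨e, -, he, heε⟩ := ENNReal.lt_iff_exists_real_btwn.1 hε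
  exact ⟨e, ENNReal.ofReal_pos.1 he, fun g hg => heε.le.trans (hεS g hg)⟩

def seminorm : Seminorm ℂ (memLpTopSubmodule μ) :=
  Seminorm.of (fun x => (N.α x).toReal)
    (fun x y => (ENNReal.toReal_mono (ENNReal.add_ne_top.2
      ⟨(N.finite_on_bdd _ x.2).ne, (N.finite_on_bdd _ y.2).ne⟩) (N.add_le _ _)).trans
      ENNReal.toReal_add_le)
    fun c x => by
      change (N.α fun z => c * x z).toReal = _
      simp [N.smul_eq]

theorem apply_eq_integral_of_forall_simpleFunc (Φ : Module.Dual ℂ (memLpTopSubmodule μ))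
    (hΦ : ∀ x, ‖Φ x‖ ≤ N.seminorm x) {h : ℂ → ℂ} (hh : Integrable h μ)
    (hs : ∀ s, Φ (ofSimpleFunc μ s) = ∫ z, s z * h z ∂μ) (x : memLpTopSubmodule μ) :
    Φ x = ∫ z, x z * h z ∂μ := by
  have key : ∀ ε > 0, ‖Φ x - ∫ z, x z * h z ∂μ‖ ≤ ε * (1 + ∫ z, ‖h z‖ ∂μ) := by
    intro ε hε
    obtain ⟨s, hxs⟩ := (x.2 : MemLp x ⊤ μ).exists_simpleFunc_ae_norm_sub_lt hε
    set y := x - ofSimpleFunc μ s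
    have hy : ∀ᵐ z ∂μ, ‖y z‖ ≤ ε := hxs.mono fun z hz => hz.le
    have hΦy : ‖Φ y‖ ≤ ε := (hΦ y).trans <|
      ENNReal.toReal_le_of_le_ofReal hε.le (N.α_le_ofReal_of_ae_norm_le y.2.1 hε.le hy)
    have hIy : ‖∫ z, y z * h z ∂μ‖ ≤ ε * ∫ z, ‖h z‖ ∂μ := by
      rw [← integral_const_mul]
      refine norm_integral_le_of_norm_le (hh.norm.const_mul ε) (hy.mono fun z hz => ?_)
      rw [norm_mul]
      exact mul_le_mul_of_nonneg_right hz (norm_nonneg _)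
    have hIsub : ∫ z, y z * h z ∂μ = ∫ z, x z * h z ∂μ - ∫ z, s z * h z ∂μ := by
      refine .trans ?_ (integral_sub (integrable_mul x hh) (integrable_mul (ofSimpleFunc μ s) hh))
      congr 1 with z
      simp [y, ofSimpleFunc, sub_mul]
    have hsplit : Φ x - ∫ z, x z * h z ∂μ = Φ y - ∫ z, y z * h z ∂μ := by
      rw [map_sub, hs, hIsub]
      ring
    calc ‖Φ x - ∫ z, x z * h z ∂μ‖ ≤ ‖Φ y‖ + ‖∫ z, y z * h z ∂μ‖ := hsplit ▸ norm_sub_le _ _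
      _ ≤ ε * (1 + ∫ z, ‖h z‖ ∂μ) := by linarith
  have hK : 0 < 1 + ∫ z, ‖h z‖ ∂μ := by positivity
  refine sub_eq_zero.1 (norm_le_zero_iff.1 (le_of_forall_pos_le_add fun δ hδ => ?_))
  simpa [div_mul_cancel₀ _ hK.ne'] using key (δ / (1 + ∫ z, ‖h z‖ ∂μ)) (by positivity)

theorem exists_integrable_apply_eq_integral [IsFiniteMeasure μ] (hN : N.IsContinuous)
    (Φ : Module.Dual ℂ (memLpTopSubmodule μ)) (hΦ : ∀ x, ‖Φ x‖ ≤ N.seminorm x) :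
    ∃ h : ℂ → ℂ, Integrable h μ ∧ ∀ x, Φ x = ∫ z, x z * h z ∂μ := by
  classical
  obtain ⟨h, hh, hSh⟩ := exists_integrable_setIntegral_eq_of_additive_of_absCont (μ := μ)
    (v := fun S => if hS : MeasurableSet S then Φ (indicator μ hS) else 0)
    (fun S T hS hT hST => by
      simp only [dif_pos hS, dif_pos hT, dif_pos (hS.union hT), indicator_union hS hT hST,
        map_add])
    fun ε hε => by
      obtain ⟨δ, hδ, hα⟩ := hN (ENNReal.ofReal ε) (ENNReal.ofReal_pos.2 hε)
      refine ⟨δ, hδ, fun S hS hSδ => ?_⟩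
      rw [dif_pos hS]
      exact (hΦ _).trans_lt (ENNReal.toReal_lt_of_lt_ofReal (hα S hS hSδ))
  refine ⟨h, hh, N.apply_eq_integral_of_forall_simpleFunc Φ hΦ hh
    (apply_ofSimpleFunc_eq_integral Φ hh fun S hS => ?_)⟩
  rw [hSh S hS, dif_pos hS]

end GaugeNorm

section HardySpace

variable {μ : Measure ℂ}

theorem OnCircle.integrable_pow (hμ : OnCircle μ) (n : ℕ) :
    Integrable (fun z : ℂ => z ^ n) μ := by
  have := hμ.1
  refine (integrable_const (1 : ℝ)).mono' (by fun_prop) ?_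
  filter_upwards [measure_eq_zero_iff_ae_notMem.1 hμ.2.1] with z hz
  simp_all

theorem OnCircle.integrable_mul_pow (hμ : OnCircle μ) {f : ℂ → ℂ} (hf : MemLp f ⊤ μ) (n : ℕ) :
    Integrable (fun z => f z * z ^ n) μ :=
  (hμ.integrable_pow n).mul_of_top_right hf

theorem MemHinf.add (hμ : OnCircle μ) {f g : ℂ → ℂ} (hf : MemHinf μ f) (hg : MemHinf μ g) :
    MemHinf μ (f + g) := by
  refine ⟨hf.1.add hg.1, fun n hn => ?_⟩
  simp only [Pi.add_apply, add_mul]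
  rw [integral_add (hμ.integrable_mul_pow hf.1 n) (hμ.integrable_mul_pow hg.1 n), hf.2 n hn,
    hg.2 n hn, add_zero]

theorem MemHinf.const_mul {f : ℂ → ℂ} (hf : MemHinf μ f) (c : ℂ) :
    MemHinf μ fun z => c * f z :=
  ⟨hf.1.const_mul c, fun n hn => by simp_rw [mul_assoc, integral_const_mul, hf.2 n hn, mul_zero]⟩

def hinfSubmodule (hμ : OnCircle μ) : Submodule ℂ (ℂ → ℂ) where
  carrier := {f | MemHinf μ f}
  add_mem' := MemHinf.add hμ
  zero_mem' := ⟨MemLp.zero', fun _ _ => by simp⟩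
  smul_mem' c _ hf := hf.const_mul c

def IsSubspace.toSubmodule {M : Set (ℂ → ℂ)} (hM : IsSubspace M) : Submodule ℂ (ℂ → ℂ) where
  carrier := M
  add_mem' hf hg := hM.2.1 _ hf _ hg
  zero_mem' := hM.1
  smul_mem' c _ hf := hM.2.2 c _ hf

theorem memHinf_of_mem_wstarClosure (hμ : OnCircle μ) {S : Set (ℂ → ℂ)}
    (hS : ∀ g ∈ S, MemHinf μ g) {f : ℂ → ℂ} (hf : MemLp f ⊤ μ) (hfS : f ∈ wstarClosure μ S) :
    MemHinf μ f := by
  refine ⟨hf, fun n hn => by_contra fun hne => ?_⟩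
  obtain ⟨g, hg, hfg⟩ := hfS _ (norm_pos_iff.2 hne) 1 (fun _ z => z ^ n)
    fun _ => hμ.integrable_pow n
  have hgn : ∫ z, (f z - g z) * z ^ n ∂μ = ∫ z, f z * z ^ n ∂μ := by
    simp only [sub_mul]
    rw [integral_sub (hμ.integrable_mul_pow hf n) (hμ.integrable_mul_pow (hS g hg).1 n),
      (hS g hg).2 n hn, sub_zero]
  exact (hfg 0).ne (congrArg _ hgn)

theorem MemHinf.mem_Halpha (N : GaugeNorm μ) {f : ℂ → ℂ} (hf : MemHinf μ f) : f ∈ Halpha N :=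
  ⟨hf.1.aestronglyMeasurable.aemeasurable, fun _ hε => ⟨f, hf, by rwa [sub_self, N.α_zero]⟩⟩

end HardySpace

/-- Lemma 3.9: if `M` is a closed subspace of `H^α`, then
`M ∩ H^∞` is weak*-closed in `H^∞`. -/
theorem inter_Hinf_weakstar_closed (μ : Measure ℂ) (hμ : OnCircle μ)
    (N : GaugeNorm μ) (hN : N.IsContinuous)
    (M : Set (ℂ → ℂ)) (hM : IsClosedSubspace N M) :
    WeakStarClosedIn μ (M ∩ {g | MemHinf μ g}) := by
  have := hμ.1
  intro f hf hfw
  have hfH : MemHinf μ f := memHinf_of_mem_wstarClosure hμ (fun g hg => hg.2) hf hfw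
  refine ⟨by_contra fun hfM => ?_, hfH⟩
  obtain ⟨e, he, hsep⟩ :=
    N.exists_pos_forall_ofReal_le_α_sub fun hcl => hfM (hM.2.2 f (hfH.mem_Halpha N) hcl)
  obtain ⟨Φ, hΦC, hΦf, hΦ⟩ := Module.Dual.exists_eq_zero_of_le_seminorm_sub (p := N.seminorm)
    (C := (hM.1.toSubmodule ⊓ hinfSubmodule hμ).comap (memLpTopSubmodule μ).subtype)
    (f := ⟨f, hf⟩) he fun g hg => (ENNReal.ofReal_le_iff_le_toReal
      (N.finite_on_bdd _ (⟨f, hf⟩ - g).2).ne).1 (hsep g (show (g : ℂ → ℂ) ∈ M from hg.1))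
  obtain ⟨h, hh, hΦh⟩ := N.exists_integrable_apply_eq_integral hN Φ hΦ
  obtain ⟨g, ⟨hgM, hgH⟩, hfg⟩ := hfw e he 1 (fun _ => h) fun _ => hh
  have hfgh : ∫ z, (f z - g z) * h z ∂μ = Φ ⟨f, hf⟩ := by
    rw [← sub_zero (Φ _), ← hΦC ⟨g, hgH.1⟩ ⟨hgM, hgH⟩, ← map_sub, hΦh]
    rfl
  simpa [hfgh, hΦf, abs_of_pos he] using hfg 0
end
end
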